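/- TVD property of the θ-limited TVD-AP scheme: let β = 1 − √2/2, α ∈ [0,1], θ = α β/(1 − β) = α(√2 − 1), let σ_e ≥ 0 and σ_i ≥ 0 satisfy the CFL conditions (1 − α) σ_e ≤ 1 − α and α σ_e ≤ α √2, and suppose w^n, w^⋆, w^{n+1} : Fin L → ℝ satisfy, for all j (indices cyclic mod L), w^⋆_j = w_j^n − β σ_e (w_j^n − w_{j−1}^n) − β σ_i (w^⋆_j − w^⋆_{j−1}) and w_j^{n+1} = w_j^n − θ(β−1) σ_e (w_j^n − w_{j−1}^n) − θ(1−β) σ_i (w^⋆_j − w^⋆_{j−1}) − θ(2−β) σ_e (w^⋆_j − w^⋆_{j−1}) − θβ σ_i (w_j^{n+1} − w_{j−1}^{n+1}) − (1−θ) σ_e (w_j^n − w_{j−1}^n) − (1−θ) σ_i (w_j^{n+1} − w_{j−1}^{n+1}). Then TV(w^⋆) ≤ TV(w^n) and TV(w^{n+1}) ≤ TV(w^n), where TV(w) = Σ_j |w_{j+1} − w_j| (cyclic sum). -/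
import Mathlib
set_option maxHeartbeats 1000000

private lemma shift_sum {L : ℕ} [NeZero L] (g : Fin L → ℝ) :
    ∑ j : Fin L, g (j - 1) = ∑ j : Fin L, g j :=
  Fintype.sum_equiv (Equiv.subRight 1) _ _ (fun _ => rfl)

private lemma tv_shift {L : ℕ} [NeZero L] (w : Fin L → ℝ) :
    ∑ j : Fin L, |w (j + 1) - w j| = ∑ j : Fin L, |w j - w (j - 1)| :=
  Fintype.sum_equiv (Equiv.addRight 1) _ _
    (fun j => by simp [Equiv.coe_addRight, add_sub_cancel_right])

private lemma sweep {L : ℕ} [NeZero L] (s : ℝ) (F G : Fin L → ℝ)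
    (h : ∀ j : Fin L, (1 + s) * F j ≤ s * F (j - 1) + G j) :
    ∑ j : Fin L, F j ≤ ∑ j : Fin L, G j := by
  have h1 : ∑ j : Fin L, ((1 + s) * F j) ≤ ∑ j : Fin L, (s * F (j - 1) + G j) :=
    Finset.sum_le_sum fun j _ => h j
  have h2 : ∑ j : Fin L, F (j - 1) = ∑ j : Fin L, F j := shift_sum F
  rw [Finset.sum_add_distrib, ← Finset.mul_sum, ← Finset.mul_sum, h2] at h1
  linarith

/-- TVD property of the θ-limited TVD-AP scheme with periodic boundary
conditions, under the uniform CFL conditions `(1 - α) σe ≤ 1 - α` and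
`α σe ≤ α √2`, with `θ = α β / (1 - β) = α (√2 - 1)`. -/
theorem theta_scheme_TVD (L : ℕ) [NeZero L] (σe σi : ℝ)
    (β α θ : ℝ) (hβ : β = 1 - Real.sqrt 2 / 2)
    (hα0 : 0 ≤ α) (hα1 : α ≤ 1) (hθ : θ = α * β / (1 - β))
    (hσe : 0 ≤ σe) (hσi : 0 ≤ σi)
    (hCFL1 : (1 - α) * σe ≤ 1 - α) (hCFL2 : α * σe ≤ α * Real.sqrt 2)
    (wn ws wn1 : Fin L → ℝ)
    (hstage1 : ∀ j : Fin L,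
      ws j = wn j - β * σe * (wn j - wn (j - 1))
                  - β * σi * (ws j - ws (j - 1)))
    (hstage2 : ∀ j : Fin L,
      wn1 j = wn j
        - θ * (β - 1) * σe * (wn j - wn (j - 1))
        - θ * (1 - β) * σi * (ws j - ws (j - 1))
        - θ * (2 - β) * σe * (ws j - ws (j - 1))
        - θ * β * σi * (wn1 j - wn1 (j - 1))
        - (1 - θ) * σe * (wn j - wn (j - 1))
        - (1 - θ) * σi * (wn1 j - wn1 (j - 1))) :
    (∑ j : Fin L, |ws (j + 1) - ws j| ≤ ∑ j : Fin L, |wn (j + 1) - wn j|) ∧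
    (∑ j : Fin L, |wn1 (j + 1) - wn1 j| ≤ ∑ j : Fin L, |wn (j + 1) - wn j|) := by
  set s : ℝ := Real.sqrt 2 with hsdef
  have hs0 : 0 ≤ s := Real.sqrt_nonneg 2
  have hs2 : s ^ 2 = 2 := Real.sq_sqrt (by norm_num)
  have hs_lb : (1.4 : ℝ) ≤ s := by nlinarith [sq_nonneg (s - 1.4)]
  have hs_ub : s ≤ (1.5 : ℝ) := by nlinarith [sq_nonneg (s - 1.5)]
  have hβ0 : 0 ≤ β := by rw [hβ]; linarith
  have hβ1 : β ≤ 1 := by rw [hβ]; linarith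
  have hβne : (1 : ℝ) - β ≠ 0 := by rw [hβ]; intro h; nlinarith
  have hθ' : θ = α * (s - 1) := by
    rw [hθ, hβ]
    rw [div_eq_iff (by intro h; nlinarith)]
    nlinarith [hs2]
  have hbsi0 : 0 ≤ β * σi := mul_nonneg hβ0 hσi
  have hbse : β * σe ≤ 1 := by
    have t1 : (1 - s/2) * ((1-α)*σe) ≤ (1-s/2)*(1-α) :=
      mul_le_mul_of_nonneg_left hCFL1 (by linarith)
    have t2 : (1 - s/2) * (α*σe) ≤ (1-s/2)*(α*s) :=
      mul_le_mul_of_nonneg_left hCFL2 (by linarith)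
    have t3 : α * s ≤ α * 1.5 := mul_le_mul_of_nonneg_left hs_ub hα0
    rw [hβ]
    nlinarith [t1, t2, t3, hs2, mul_nonneg hα0 hs0]
  have key1 : ∀ j : Fin L, (1 + β*σi) * |ws j - ws (j-1)| ≤
      β*σi * |ws (j-1) - ws (j-1-1)| +
      ((1 - β*σe) * |wn j - wn (j-1)| + β*σe * |wn (j-1) - wn (j-1-1)|) := by
    intro j
    have hev : (1 + β*σi) * (ws j - ws (j-1)) =
        (1 - β*σe) * (wn j - wn (j-1)) + β*σe * (wn (j-1) - wn (j-1-1))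
        + β*σi * (ws (j-1) - ws (j-1-1)) := by
      linear_combination hstage1 j - hstage1 (j-1)
    have h3 := abs_add_three ((1-β*σe)*(wn j - wn (j-1)))
      (β*σe*(wn (j-1) - wn (j-1-1))) (β*σi*(ws (j-1) - ws (j-1-1)))
    have hL : (1 + β*σi) * |ws j - ws (j-1)| =
        |(1-β*σe)*(wn j - wn (j-1)) + β*σe*(wn (j-1) - wn (j-1-1))
          + β*σi*(ws (j-1) - ws (j-1-1))| := by
      rw [← hev, abs_mul, abs_of_nonneg (by linarith : (0:ℝ) ≤ 1 + β*σi)]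
    simp only [abs_mul, abs_of_nonneg hβ0, abs_of_nonneg hσe, abs_of_nonneg hσi,
      abs_of_nonneg (by linarith : (0:ℝ) ≤ 1 - β*σe)] at h3
    rw [hL]
    linarith
  have S1 : ∑ j : Fin L, |ws j - ws (j-1)| ≤ ∑ j : Fin L, |wn j - wn (j-1)| := by
    have hsw := sweep (β*σi) (fun j => |ws j - ws (j-1)|)
        (fun j => (1-β*σe) * |wn j - wn (j-1)| + β*σe * |wn (j-1) - wn (j-1-1)|) key1
    have hsh : ∑ j : Fin L, |wn (j-1) - wn (j-1-1)| = ∑ j : Fin L, |wn j - wn (j-1)| :=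
      shift_sum (fun j => |wn j - wn (j-1)|)
    rw [Finset.sum_add_distrib, ← Finset.mul_sum, ← Finset.mul_sum, hsh] at hsw
    linarith
  
  have hθβ : θ * (1 - β) = α * β := by
    rw [hθ]; field_simp
  have hθ0 : 0 ≤ θ := by rw [hθ']; nlinarith
  have hθ1 : θ ≤ 1 := by rw [hθ']; nlinarith
  have hS0 : 0 ≤ θ*β*σi + (1-θ)*σi := by nlinarith [mul_nonneg (mul_nonneg hθ0 hβ0) hσi, mul_nonneg (by linarith : (0:ℝ) ≤ 1-θ) hσi]
  have hc1eq : 1 - θ*(β-1)*σe - (1-θ)*σe - α*(1-β*σe) = (1-α)*(1-σe) := by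
    rw [hθ', hβ]; linear_combination (α*σe/2) * hs2
  have hc2eq : θ*(β-1)*σe + (1-θ)*σe - α*(β*σe) = (1-α)*σe := by
    rw [hθ', hβ]; linear_combination (-(α*σe)/2) * hs2
  have hc3eq : α - θ*(2-β)*σe = α*(1 - s*σe/2) := by
    rw [hθ', hβ]; linear_combination (-(α*σe)/2) * hs2
  have hc1 : 0 ≤ 1 - θ*(β-1)*σe - (1-θ)*σe - α*(1-β*σe) := by
    rw [hc1eq]; nlinarith [hCFL1]
  have hc2 : 0 ≤ θ*(β-1)*σe + (1-θ)*σe - α*(β*σe) := by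
    rw [hc2eq]; exact mul_nonneg (by linarith) hσe
  have hc3 : 0 ≤ α - θ*(2-β)*σe := by
    rw [hc3eq]
    have t4 := mul_le_mul_of_nonneg_left hCFL2 (by linarith : (0:ℝ) ≤ s/2)
    have hA : α*s^2 = 2*α := by rw [hs2]; ring
    linarith [t4, hA]
  have hc4 : 0 ≤ θ*(2-β)*σe := mul_nonneg (mul_nonneg hθ0 (by linarith)) hσe
  have key2 : ∀ j : Fin L, (1 + (θ*β*σi + (1-θ)*σi)) * |wn1 j - wn1 (j-1)| ≤
      (θ*β*σi + (1-θ)*σi) * |wn1 (j-1) - wn1 (j-1-1)| +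
      ((1 - θ*(β-1)*σe - (1-θ)*σe - α*(1-β*σe)) * |wn j - wn (j-1)|
        + (θ*(β-1)*σe + (1-θ)*σe - α*(β*σe)) * |wn (j-1) - wn (j-1-1)|
        + (α - θ*(2-β)*σe) * |ws j - ws (j-1)|
        + (θ*(2-β)*σe) * |ws (j-1) - ws (j-1-1)|) := by
    intro j
    have hev : (1 + (θ*β*σi + (1-θ)*σi)) * (wn1 j - wn1 (j-1)) =
        (1 - θ*(β-1)*σe - (1-θ)*σe - α*(1-β*σe)) * (wn j - wn (j-1))
        + (θ*(β-1)*σe + (1-θ)*σe - α*(β*σe)) * (wn (j-1) - wn (j-1-1))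
        + (α - θ*(2-β)*σe) * (ws j - ws (j-1))
        + (θ*(2-β)*σe) * (ws (j-1) - ws (j-1-1))
        + (θ*β*σi + (1-θ)*σi) * (wn1 (j-1) - wn1 (j-1-1)) := by
      linear_combination hstage2 j - hstage2 (j-1) - α * hstage1 j + α * hstage1 (j-1)
        - σi * ((ws j - ws (j-1)) - (ws (j-1) - ws (j-1-1))) * hθβ
    set A := (1 - θ*(β-1)*σe - (1-θ)*σe - α*(1-β*σe)) * (wn j - wn (j-1)) with hA
    set B := (θ*(β-1)*σe + (1-θ)*σe - α*(β*σe)) * (wn (j-1) - wn (j-1-1)) with hB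
    set C := (α - θ*(2-β)*σe) * (ws j - ws (j-1)) with hC
    set Dd := (θ*(2-β)*σe) * (ws (j-1) - ws (j-1-1)) with hD
    set E := (θ*β*σi + (1-θ)*σi) * (wn1 (j-1) - wn1 (j-1-1)) with hE
    have hL : (1 + (θ*β*σi + (1-θ)*σi)) * |wn1 j - wn1 (j-1)| = |A+B+C+Dd+E| := by
      rw [← hev, abs_mul, abs_of_nonneg (by linarith : (0:ℝ) ≤ 1 + (θ*β*σi + (1-θ)*σi))]
    have t1 : |A+B+C+Dd+E| ≤ |A+B+C+Dd| + |E| := abs_add_le _ _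
    have t2 : |A+B+C+Dd| ≤ |A+B+C| + |Dd| := abs_add_le _ _
    have t3 : |A+B+C| ≤ |A| + |B| + |C| := abs_add_three _ _ _
    have eA : |A| = (1 - θ*(β-1)*σe - (1-θ)*σe - α*(1-β*σe)) * |wn j - wn (j-1)| := by
      rw [hA, abs_mul, abs_of_nonneg hc1]
    have eB : |B| = (θ*(β-1)*σe + (1-θ)*σe - α*(β*σe)) * |wn (j-1) - wn (j-1-1)| := by
      rw [hB, abs_mul, abs_of_nonneg hc2]
    have eC : |C| = (α - θ*(2-β)*σe) * |ws j - ws (j-1)| := by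
      rw [hC, abs_mul, abs_of_nonneg hc3]
    have eD : |Dd| = (θ*(2-β)*σe) * |ws (j-1) - ws (j-1-1)| := by
      rw [hD, abs_mul, abs_of_nonneg hc4]
    have eE : |E| = (θ*β*σi + (1-θ)*σi) * |wn1 (j-1) - wn1 (j-1-1)| := by
      rw [hE, abs_mul, abs_of_nonneg hS0]
    rw [hL]
    linarith [t1, t2, t3, eA.le, eB.le, eC.le, eD.le, eE.le, eA.ge, eB.ge, eC.ge, eD.ge, eE.ge]
  have S2 : ∑ j : Fin L, |wn1 j - wn1 (j-1)| ≤ ∑ j : Fin L, |wn j - wn (j-1)| := by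
    have hsw := sweep (θ*β*σi + (1-θ)*σi) (fun j => |wn1 j - wn1 (j-1)|)
        (fun j => (1 - θ*(β-1)*σe - (1-θ)*σe - α*(1-β*σe)) * |wn j - wn (j-1)|
          + (θ*(β-1)*σe + (1-θ)*σe - α*(β*σe)) * |wn (j-1) - wn (j-1-1)|
          + (α - θ*(2-β)*σe) * |ws j - ws (j-1)|
          + (θ*(2-β)*σe) * |ws (j-1) - ws (j-1-1)|) key2
    have hshD : ∑ j : Fin L, |wn (j-1) - wn (j-1-1)| = ∑ j : Fin L, |wn j - wn (j-1)| :=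
      shift_sum (fun j => |wn j - wn (j-1)|)
    have hshE : ∑ j : Fin L, |ws (j-1) - ws (j-1-1)| = ∑ j : Fin L, |ws j - ws (j-1)| :=
      shift_sum (fun j => |ws j - ws (j-1)|)
    rw [Finset.sum_add_distrib, Finset.sum_add_distrib, Finset.sum_add_distrib,
      ← Finset.mul_sum, ← Finset.mul_sum, ← Finset.mul_sum, ← Finset.mul_sum,
      hshD, hshE] at hsw
    nlinarith [hsw, S1, mul_le_mul_of_nonneg_left S1 hα0]
  refine ⟨?_, ?_⟩
  · rw [tv_shift ws, tv_shift wn]; exact S1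
  · rw [tv_shift wn1, tv_shift wn]; exact S2
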